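/- Let L be the model of the free graded Lie algebra on two generators a, b of odd degree described in the context, and for k, n ∈ ℕ let L^{(k,n)} be its component of word length n and word length k in b. Then for every n ≥ 1 the ℚ-vector space L^{(2,n)} is finite dimensional of dimension: n/2 − 1 if n ≡ 0 (mod 4); (n − 1)/2 if n is odd; and n/2 if n ≡ 2 (mod 4). -/

import Mathlib

/-!
Common setup: the free graded Lie algebra on two odd-degree generators `a`, `b`,
modelled inside its universal enveloping algebra `A := FreeAlgebra ℚ (Fin 2)`.
-/

noncomputable section

namespace Omnibus

/-- The free associative unital `ℚ`-algebra on two generators. -/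
abbrev A : Type := FreeAlgebra ℚ (Fin 2)

/-- The first generator, of odd degree. -/
def a : A := FreeAlgebra.ι ℚ 0

/-- The second generator, of odd degree. -/
def b : A := FreeAlgebra.ι ℚ 1

/-- The word (noncommutative monomial) in the letters `a`, `b` associated to a
list of letters. -/
def word (w : List (Fin 2)) : A := (w.map (FreeAlgebra.ι ℚ)).prod

/-- The `ℚ`-basis of `A` given by the words in `a`, `b`. -/
def basisWords : Module.Basis (FreeMonoid (Fin 2)) ℚ A := FreeAlgebra.basisFreeMonoid ℚ (Fin 2)

/-- The `ℚ`-linear projection of `A` onto the span of the words of odd length,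
sending every word of even length to `0`. -/
def pr : A →ₗ[ℚ] A :=
  basisWords.constr ℚ fun w =>
    if Odd (FreeMonoid.toList w).length then word (FreeMonoid.toList w) else 0

/-- The bracket `⁅x,y⁆ = x*y − y*x + 2·(π y)·(π x)`; on elements homogeneous for the
parity grading by word length this is the super-commutator for both generators odd. -/
def br (x y : A) : A := x * y - y * x + 2 * pr y * pr x

/-- A `ℚ`-subspace of `A` closed under the bracket. -/
def IsBracketClosed (S : Submodule ℚ A) : Prop := ∀ x ∈ S, ∀ y ∈ S, br x y ∈ S

/-- `L`: the smallest `ℚ`-subspace of `A` containing `a`, `b` and closed under the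
bracket; a model of the free graded Lie algebra on two odd-degree generators. -/
def L : Submodule ℚ A := sInf {S : Submodule ℚ A | a ∈ S ∧ b ∈ S ∧ IsBracketClosed S}

/-- The span of the set of words `w` satisfying a property `P`. -/
def wordsSpan (P : List (Fin 2) → Prop) : Submodule ℚ A :=
  Submodule.span ℚ (word '' {w | P w})

/-- `L^{(k)}`: the part of `L` of word length `k` in `b`. -/
def Lk (k : ℕ) : Submodule ℚ A := L ⊓ wordsSpan fun w => w.count 1 = k

/-- `L^{(k,n)}`: the part of `L` of word length `k` in `b` and total word length `n`. -/
def Lkn (k n : ℕ) : Submodule ℚ A :=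
  L ⊓ wordsSpan fun w => w.count 1 = k ∧ w.length = n

/-- The `j`-fold iterated adjoint map `ad(x)^j(y)`. -/
def adIter (x : A) (j : ℕ) (y : A) : A := (br x)^[j] y

end Omnibus

/-!
`L` lies in the span of `a`, `a * a`, the elements `c i = ad(a)^i(b)`, their brackets
`d i j = ⁅c i, c j⁆` and all words with at least three letters `b`: this span contains `a` and `b`
and is closed under the bracket, since `ad a` is a super-derivation
(`⁅a, d i j⁆ = d (i+1) j ± d i (j+1)`) and `ad (a * a) = (ad a)²`. Projecting onto the words with
two `b`'s and length `n` shows that `L^{(2,n)}` is spanned by the `d i j` with `i + j + 2 = n`;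
by super-antisymmetry it suffices to take `i < j`, or `i = j` even (`d i i = 0` for odd `i`).
Since `c i = ± b a^i + a * (…)`, the coefficient of the word `b a^t b a^u` in `d i j` vanishes
for `t < min i j` but not for `t = i` when `i < j` or `i = j` is even, so these `d i j` are
linearly independent by triangularity, and counting them gives the formula.
-/

theorem linearIndependent_of_triangular {K V ι : Type*} [Field K] [AddCommGroup V] [Module K V]
    [Fintype ι] [LinearOrder ι] (v : ι → V) (φ : ι → V →ₗ[K] K)
    (hlt : ∀ i j, i < j → φ i (v j) = 0) (hdiag : ∀ i, φ i (v i) ≠ 0) : LinearIndependent K v := by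
  classical
  let M : Matrix ι ι K := .of fun i j => φ i (v j)
  have hM : IsUnit M.det := by
    rw [Matrix.det_of_isLowerTriangular M fun i j hij => hlt i j hij, isUnit_iff_ne_zero]
    exact Finset.prod_ne_zero_iff.2 fun i _ => hdiag i
  exact .of_comp (LinearMap.pi φ) (Matrix.linearIndependent_cols_of_isUnit
    ((M.isUnit_iff_isUnit_det).2 hM))

namespace Omnibus

theorem word_append (u v : List (Fin 2)) : word (u ++ v) = word u * word v := by
  simp [word]

theorem basisWords_apply (w : FreeMonoid (Fin 2)) : basisWords w = word w.toList := by
  simp [basisWords, FreeAlgebra.basisFreeMonoid, FreeAlgebra.equivMonoidAlgebraFreeMonoid, word,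
    FreeMonoid.lift_apply]

theorem word_eq_basisWords (w : List (Fin 2)) : word w = basisWords (FreeMonoid.ofList w) := by
  rw [basisWords_apply, FreeMonoid.toList_ofList]

theorem a_eq_word : a = word [0] := by simp [a, word]

theorem b_eq_word : b = word [1] := by simp [b, word]

def coeff (w : List (Fin 2)) : A →ₗ[ℚ] ℚ := basisWords.coord (FreeMonoid.ofList w)

theorem coeff_word (w v : List (Fin 2)) : coeff w (word v) = if v = w then 1 else 0 := by
  classical
  rw [coeff, Module.Basis.coord_apply, word_eq_basisWords, Module.Basis.repr_self,
    Finsupp.single_apply]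
  simp [eq_comm]

theorem coeff_word_mul_of_not_prefix {u w : List (Fin 2)} (h : ¬ u <+: w) (x : A) :
    coeff w (word u * x) = 0 := by
  have hcomp : (coeff w).comp (LinearMap.mulLeft ℚ (word u)) = 0 := basisWords.ext fun v => by
    simp only [LinearMap.comp_apply, LinearMap.mulLeft_apply, basisWords_apply, ← word_append,
      coeff_word, LinearMap.zero_apply, ite_eq_right_iff, one_ne_zero, imp_false]
    exact fun huv => h ⟨_, huv⟩
  exact LinearMap.congr_fun hcomp x

theorem coeff_append_word_mul (u v : List (Fin 2)) (x : A) :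
    coeff (u ++ v) (word u * x) = coeff v x := by
  have hcomp : (coeff (u ++ v)).comp (LinearMap.mulLeft ℚ (word u)) = coeff v :=
    basisWords.ext fun w => by simp [basisWords_apply, ← word_append, coeff_word]
  exact LinearMap.congr_fun hcomp x

theorem coeff_one_cons_a_mul (w : List (Fin 2)) (x : A) : coeff (1 :: w) (a * x) = 0 :=
  a_eq_word ▸ coeff_word_mul_of_not_prefix (by simp) x

theorem word_mem_wordsSpan {P : List (Fin 2) → Prop} {w : List (Fin 2)} (h : P w) :
    word w ∈ wordsSpan P :=
  Submodule.subset_span ⟨w, h, rfl⟩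

theorem wordsSpan_le_iff {P : List (Fin 2) → Prop} {S : Submodule ℚ A} :
    wordsSpan P ≤ S ↔ ∀ w, P w → word w ∈ S := by
  simp [wordsSpan, Submodule.span_le, Set.subset_def]

theorem wordsSpan_mono {P Q : List (Fin 2) → Prop} (h : ∀ w, P w → Q w) :
    wordsSpan P ≤ wordsSpan Q :=
  wordsSpan_le_iff.2 fun w hw => word_mem_wordsSpan (h w hw)

theorem mem_wordsSpan_true (x : A) : x ∈ wordsSpan fun _ => True := by
  have hx : x ∈ Submodule.span ℚ (Set.range basisWords) := by
    rw [basisWords.span_eq]; trivial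
  refine Submodule.span_mono ?_ hx
  rintro _ ⟨w, rfl⟩
  exact ⟨w.toList, trivial, (basisWords_apply w).symm⟩

theorem mul_mem_wordsSpan {P Q R : List (Fin 2) → Prop} (h : ∀ u v, P u → Q v → R (u ++ v))
    {x y : A} (hx : x ∈ wordsSpan P) (hy : y ∈ wordsSpan Q) : x * y ∈ wordsSpan R := by
  have hle : wordsSpan P * wordsSpan Q ≤ wordsSpan R := by
    rw [wordsSpan, wordsSpan, Submodule.span_mul_span, Submodule.span_le]
    rintro _ ⟨_, ⟨u, hu, rfl⟩, _, ⟨v, hv, rfl⟩, rfl⟩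
    show word u * word v ∈ wordsSpan R
    rw [← word_append]
    exact word_mem_wordsSpan (h u v hu hv)
  exact hle (Submodule.mul_mem_mul hx hy)

open Classical in
def wordsProj (P : List (Fin 2) → Prop) : A →ₗ[ℚ] A :=
  basisWords.constr ℚ fun w => if P w.toList then word w.toList else 0

theorem wordsProj_word (P : List (Fin 2) → Prop) (w : List (Fin 2)) [Decidable (P w)] :
    wordsProj P (word w) = if P w then word w else 0 := by
  conv_lhs => rw [wordsProj, word_eq_basisWords, Module.Basis.constr_basis]
  by_cases h : P w <;> simp only [FreeMonoid.toList_ofList, h, ↓reduceIte]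

theorem wordsProj_eq_self {P Q : List (Fin 2) → Prop} (h : ∀ w, Q w → P w) {x : A}
    (hx : x ∈ wordsSpan Q) : wordsProj P x = x := by
  classical
  refine LinearMap.eqOn_span (g := LinearMap.id) ?_ hx
  rintro _ ⟨w, hw, rfl⟩
  simp [wordsProj_word, h w hw]

theorem wordsProj_eq_zero {P Q : List (Fin 2) → Prop} (h : ∀ w, Q w → ¬ P w) {x : A}
    (hx : x ∈ wordsSpan Q) : wordsProj P x = 0 := by
  classical
  refine LinearMap.eqOn_span (g := 0) ?_ hx
  rintro _ ⟨w, hw, rfl⟩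
  simp [wordsProj_word, h w hw]

theorem wordsProj_mem {P Q : List (Fin 2) → Prop} {x : A} (hx : x ∈ wordsSpan Q) :
    wordsProj P x ∈ wordsSpan Q := by
  classical
  refine (wordsSpan_le_iff (S := (wordsSpan Q).comap (wordsProj P))).2 (fun w hw => ?_) hx
  rw [Submodule.mem_comap, wordsProj_word]
  split_ifs
  exacts [word_mem_wordsSpan hw, zero_mem _]

theorem pr_eq_wordsProj : pr = wordsProj fun w => Odd w.length := by
  refine basisWords.ext fun w => ?_
  rw [pr, Module.Basis.constr_basis, basisWords_apply, wordsProj_word]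

def homog (k n : ℕ) : Submodule ℚ A := wordsSpan fun w => w.count 1 = k ∧ w.length = n

def countGe (k : ℕ) : Submodule ℚ A := wordsSpan fun w => k ≤ w.count 1

theorem word_mem_homog (w : List (Fin 2)) : word w ∈ homog (w.count 1) w.length :=
  word_mem_wordsSpan ⟨rfl, rfl⟩

theorem homog_le_countGe (k n : ℕ) : homog k n ≤ countGe k :=
  wordsSpan_mono fun _ hw => hw.1.ge

theorem mem_countGe_zero (x : A) : x ∈ countGe 0 := by
  simpa [countGe] using mem_wordsSpan_true x

theorem mul_mem_homog {x y : A} {k n k' n' : ℕ} (hx : x ∈ homog k n) (hy : y ∈ homog k' n') :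
    x * y ∈ homog (k + k') (n + n') :=
  mul_mem_wordsSpan (fun u v hu hv => by simp [List.count_append, hu.1, hu.2, hv.1, hv.2]) hx hy

theorem wordsProj_of_mem_homog {x : A} {k m : ℕ} (hx : x ∈ homog k m) (k' n : ℕ) :
    wordsProj (fun w => w.count 1 = k' ∧ w.length = n) x = if k = k' ∧ m = n then x else 0 := by
  split_ifs with h
  · exact wordsProj_eq_self (fun w hw => h.1 ▸ h.2 ▸ hw) hx
  · refine wordsProj_eq_zero (fun w hw hw' => h ?_) hx
    exact ⟨hw.1 ▸ hw'.1, hw.2 ▸ hw'.2⟩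

theorem pr_mem {P : List (Fin 2) → Prop} {x : A} (hx : x ∈ wordsSpan P) : pr x ∈ wordsSpan P :=
  pr_eq_wordsProj ▸ wordsProj_mem hx

theorem pr_eq_self_of_odd {x : A} {k n : ℕ} (hx : x ∈ homog k n) (hn : Odd n) : pr x = x :=
  pr_eq_wordsProj ▸ wordsProj_eq_self (fun _ hw => hw.2 ▸ hn) hx

theorem pr_eq_zero_of_even {x : A} {k n : ℕ} (hx : x ∈ homog k n) (hn : Even n) : pr x = 0 :=
  pr_eq_wordsProj ▸ wordsProj_eq_zero (fun _ hw => hw.2 ▸ Nat.not_odd_iff_even.2 hn) hx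

def brₗ : A →ₗ[ℚ] A →ₗ[ℚ] A :=
  LinearMap.mk₂ ℚ br (fun _ _ _ => by simp only [br, map_add]; noncomm_ring)
    (fun _ _ _ => by simp only [br, map_smul, smul_mul_assoc, mul_smul_comm, smul_sub, smul_add])
    (fun _ _ _ => by simp only [br, map_add]; noncomm_ring)
    (fun _ _ _ => by simp only [br, map_smul, smul_mul_assoc, mul_smul_comm, smul_sub, smul_add])

theorem isBracketClosed_span {s : Set A} (h : ∀ x ∈ s, ∀ y ∈ s, br x y ∈ Submodule.span ℚ s) :
    IsBracketClosed (Submodule.span ℚ s) := by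
  intro x hx y hy
  have hxy := Submodule.apply_mem_map₂ brₗ hx hy
  rw [Submodule.map₂_span_span] at hxy
  refine Submodule.span_le.2 ?_ hxy
  rintro _ ⟨x, hx, y, hy, rfl⟩
  exact h x hx y hy

theorem br_mem_wordsSpan {P Q R : List (Fin 2) → Prop} (h : ∀ u v, P u → Q v → R (u ++ v))
    (h' : ∀ u v, P u → Q v → R (v ++ u)) {x y : A} (hx : x ∈ wordsSpan P)
    (hy : y ∈ wordsSpan Q) : br x y ∈ wordsSpan R := by
  have hyx : ∀ {y' x'}, y' ∈ wordsSpan Q → x' ∈ wordsSpan P → y' * x' ∈ wordsSpan R :=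
    mul_mem_wordsSpan fun v u hv hu => h' u v hu hv
  have htwo : (2 : A) * pr y * pr x = pr y * pr x + pr y * pr x := by noncomm_ring
  rw [br, htwo]
  exact add_mem (sub_mem (mul_mem_wordsSpan h hx hy) (hyx hy hx))
    (add_mem (hyx (pr_mem hy) (pr_mem hx)) (hyx (pr_mem hy) (pr_mem hx)))

theorem br_mem_homog {x y : A} {k n k' n' : ℕ} (hx : x ∈ homog k n) (hy : y ∈ homog k' n') :
    br x y ∈ homog (k + k') (n + n') := by
  refine br_mem_wordsSpan ?_ ?_ hx hy <;>
  · rintro u v ⟨hu₁, hu₂⟩ ⟨hv₁, hv₂⟩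
    simp only [List.count_append, List.length_append]
    omega

theorem br_mem_countGe {x y : A} {k k' : ℕ} (hx : x ∈ countGe k) (hy : y ∈ countGe k') :
    br x y ∈ countGe (k + k') := by
  refine br_mem_wordsSpan ?_ ?_ hx hy <;>
  · intro u v hu hv
    simp only [List.count_append]
    omega

theorem br_eq_of_homog {x y : A} {k n k' n' : ℕ} (hx : x ∈ homog k n) (hy : y ∈ homog k' n') :
    br x y = x * y - (-1 : ℚ) ^ (n * n') • (y * x) := by
  rcases Nat.even_or_odd n with hn | hn
  · simp [br, pr_eq_zero_of_even hx hn, (hn.mul_right n').neg_one_pow]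
  rcases Nat.even_or_odd n' with hn' | hn'
  · simp [br, pr_eq_zero_of_even hy hn', (hn'.mul_left n).neg_one_pow]
  · rw [br, pr_eq_self_of_odd hx hn, pr_eq_self_of_odd hy hn', (hn.mul hn').neg_one_pow,
      neg_one_smul]
    noncomm_ring

theorem br_swap {x y : A} {k n k' n' : ℕ} (hx : x ∈ homog k n) (hy : y ∈ homog k' n') :
    br y x = -(-1 : ℚ) ^ (n * n') • br x y := by
  rw [br_eq_of_homog hx hy, br_eq_of_homog hy hx, mul_comm n']
  rcases Nat.even_or_odd (n * n') with h | h
  · rw [h.neg_one_pow]; module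
  · rw [h.neg_one_pow]; module

theorem br_self_eq_zero_of_even {x : A} {k n : ℕ} (hx : x ∈ homog k n) (hn : Even n) :
    br x x = 0 := by
  simp [br, pr_eq_zero_of_even hx hn]

theorem leibniz_br_of_odd {x y z : A} {k n k₁ n₁ k₂ n₂ : ℕ} (hx : x ∈ homog k n) (hn : Odd n)
    (hy : y ∈ homog k₁ n₁) (hz : z ∈ homog k₂ n₂) :
    br x (br y z) = br (br x y) z + (-1 : ℚ) ^ n₁ • br y (br x z) := by
  rw [br_eq_of_homog hx (br_mem_homog hy hz), br_eq_of_homog hy hz,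
    br_eq_of_homog (br_mem_homog hx hy) hz, br_eq_of_homog hy (br_mem_homog hx hz),
    br_eq_of_homog hx hz, br_eq_of_homog hx hy]
  have hn' : ¬ Even n := Nat.not_even_iff_odd.2 hn
  simp only [neg_one_pow_eq_ite, Nat.even_add, Nat.even_mul, hn', false_or, false_iff]
  by_cases h₁ : Even n₁ <;> by_cases h₂ : Even n₂ <;>
    simp only [h₁, h₂, or_self, or_true, or_false, iff_true, iff_false, not_true_eq_false,
      not_false_eq_true, ↓reduceIte, one_smul, neg_smul] <;> noncomm_ring

def c (i : ℕ) : A := adIter a i b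

def d (i j : ℕ) : A := br (c i) (c j)

theorem c_zero : c 0 = b := rfl

theorem c_succ (i : ℕ) : c (i + 1) = br a (c i) := Function.iterate_succ_apply' _ _ _

theorem a_mem_homog : a ∈ homog 0 1 := a_eq_word ▸ word_mem_homog [0]

theorem c_mem_homog (i : ℕ) : c i ∈ homog 1 (i + 1) := by
  induction i with
  | zero => simpa [c_zero, b_eq_word] using word_mem_homog [1]
  | succ i ih => simpa [c_succ, add_comm] using br_mem_homog a_mem_homog ih

theorem d_mem_homog (i j : ℕ) : d i j ∈ homog 2 (i + j + 2) := by
  simpa [d, add_add_add_comm] using br_mem_homog (c_mem_homog i) (c_mem_homog j)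

theorem d_eq (i j : ℕ) : d i j = c i * c j - (-1 : ℚ) ^ ((i + 1) * (j + 1)) • (c j * c i) :=
  br_eq_of_homog (c_mem_homog i) (c_mem_homog j)

theorem br_a_d (i j : ℕ) : br a (d i j) = d (i + 1) j + (-1 : ℚ) ^ (i + 1) • d i (j + 1) := by
  rw [d, leibniz_br_of_odd a_mem_homog odd_one (c_mem_homog i) (c_mem_homog j), ← c_succ,
    ← c_succ]
  rfl

theorem br_a_a : br a a = (2 : ℚ) • (a * a) := by
  rw [br_eq_of_homog a_mem_homog a_mem_homog]
  module

theorem br_a_mul_a : br a (a * a) = 0 := by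
  rw [br_eq_of_homog a_mem_homog (mul_mem_homog a_mem_homog a_mem_homog)]
  simp [mul_assoc]

theorem br_mul_a_a {x : A} {k n : ℕ} (hx : x ∈ homog k n) : br (a * a) x = br a (br a x) := by
  rw [br_eq_of_homog (mul_mem_homog a_mem_homog a_mem_homog) hx,
    br_eq_of_homog a_mem_homog (br_mem_homog a_mem_homog hx), br_eq_of_homog a_mem_homog hx]
  simp only [neg_one_pow_eq_ite, Nat.even_add, Nat.even_mul]
  by_cases h : Even n <;>
    simp only [h, Nat.not_even_one, or_self, or_true, or_false, iff_true, ↓reduceIte, one_smul,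
      neg_smul] <;>
    noncomm_ring

def posGens : Set A :=
  Set.range c ∪ Set.range (Function.uncurry d) ∪ word '' {w | 3 ≤ w.count 1}

def gens : Set A := {a, a * a} ∪ posGens

def cover : Submodule ℚ A := Submodule.span ℚ gens

theorem exists_mem_homog_of_mem_gens {g : A} (hg : g ∈ gens) : ∃ k n, g ∈ homog k n := by
  rcases hg with (rfl | rfl) | ((⟨i, rfl⟩ | ⟨⟨i, j⟩, rfl⟩) | ⟨w, -, rfl⟩)
  exacts [⟨_, _, a_mem_homog⟩, ⟨_, _, mul_mem_homog a_mem_homog a_mem_homog⟩,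
    ⟨_, _, c_mem_homog i⟩, ⟨_, _, d_mem_homog i j⟩, ⟨_, _, word_mem_homog w⟩]

theorem mem_countGe_of_mem_posGens {g : A} (hg : g ∈ posGens) : g ∈ countGe 1 := by
  rcases hg with (⟨i, rfl⟩ | ⟨⟨i, j⟩, rfl⟩) | ⟨w, hw, rfl⟩
  · exact homog_le_countGe _ _ (c_mem_homog i)
  · exact wordsSpan_mono (fun _ hw => by simp [hw]) (d_mem_homog i j)
  · exact word_mem_wordsSpan (by simp at hw; omega)

theorem c_or_mem_countGe_two_of_mem_posGens {g : A} (hg : g ∈ posGens) :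
    (∃ i, g = c i) ∨ g ∈ countGe 2 := by
  rcases hg with (⟨i, rfl⟩ | ⟨⟨i, j⟩, rfl⟩) | ⟨w, hw, rfl⟩
  · exact .inl ⟨i, rfl⟩
  · exact .inr (homog_le_countGe _ _ (d_mem_homog i j))
  · exact .inr (word_mem_wordsSpan (by simp at hw; omega))

theorem a_mem_cover : a ∈ cover := Submodule.subset_span (.inl (.inl rfl))

theorem a_mul_a_mem_cover : a * a ∈ cover := Submodule.subset_span (.inl (.inr rfl))

theorem c_mem_cover (i : ℕ) : c i ∈ cover := Submodule.subset_span (.inr (.inl (.inl ⟨i, rfl⟩)))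

theorem d_mem_cover (i j : ℕ) : d i j ∈ cover :=
  Submodule.subset_span (.inr (.inl (.inr ⟨(i, j), rfl⟩)))

theorem countGe_three_le_cover : countGe 3 ≤ cover :=
  Submodule.span_mono fun _ hw => .inr (.inr hw)

theorem br_a_mem_cover {x : A} (hx : x ∈ cover) : br a x ∈ cover := by
  refine (Submodule.span_le (p := cover.comap (brₗ a))).2
    (fun g hg => show br a g ∈ cover from ?_) hx
  rcases hg with (rfl | rfl) | ((⟨i, rfl⟩ | ⟨⟨i, j⟩, rfl⟩) | ⟨w, hw, rfl⟩)
  · exact br_a_a ▸ Submodule.smul_mem _ _ a_mul_a_mem_cover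
  · exact br_a_mul_a ▸ zero_mem _
  · exact c_succ i ▸ c_mem_cover (i + 1)
  · exact (br_a_d i j).symm ▸ add_mem (d_mem_cover _ _) (Submodule.smul_mem _ _ (d_mem_cover _ _))
  · exact countGe_three_le_cover (br_mem_countGe (mem_countGe_zero a) (word_mem_wordsSpan hw) :)

theorem br_mem_cover_of_mem_pair {g h : A} (hg : g ∈ ({a, a * a} : Set A)) (hh : h ∈ gens) :
    br g h ∈ cover := by
  have hh' : h ∈ cover := Submodule.subset_span hh
  rcases hg with rfl | rfl
  · exact br_a_mem_cover hh'
  · obtain ⟨k, n, hkn⟩ := exists_mem_homog_of_mem_gens hh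
    exact br_mul_a_a hkn ▸ br_a_mem_cover (br_a_mem_cover hh')

theorem br_mem_cover_of_mem_posGens {g h : A} (hg : g ∈ posGens) (hh : h ∈ posGens) :
    br g h ∈ cover := by
  rcases c_or_mem_countGe_two_of_mem_posGens hg with ⟨i, rfl⟩ | hg₂
  · rcases c_or_mem_countGe_two_of_mem_posGens hh with ⟨j, rfl⟩ | hh₂
    · exact d_mem_cover i j
    · exact countGe_three_le_cover (br_mem_countGe (mem_countGe_of_mem_posGens hg) hh₂ :)
  · exact countGe_three_le_cover (br_mem_countGe hg₂ (mem_countGe_of_mem_posGens hh) :)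

theorem isBracketClosed_cover : IsBracketClosed cover := by
  refine isBracketClosed_span fun g hg h hh => ?_
  rcases hg with hg0 | hgP
  · exact br_mem_cover_of_mem_pair hg0 hh
  rcases hh with hh0 | hhP
  · obtain ⟨k, n, hgkn⟩ := exists_mem_homog_of_mem_gens (.inr hgP)
    obtain ⟨k', n', hhkn⟩ := exists_mem_homog_of_mem_gens (.inl hh0)
    rw [br_swap hhkn hgkn]
    exact Submodule.smul_mem _ _ (br_mem_cover_of_mem_pair hh0 (.inr hgP))
  · exact br_mem_cover_of_mem_posGens hgP hhP

theorem L_le_cover : L ≤ cover :=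
  sInf_le ⟨a_mem_cover, c_mem_cover 0, isBracketClosed_cover⟩

theorem isBracketClosed_L : IsBracketClosed L := fun x hx y hy =>
  Submodule.mem_sInf.2 fun S hS =>
    hS.2.2 x (Submodule.mem_sInf.1 hx S hS) y (Submodule.mem_sInf.1 hy S hS)

theorem c_mem_L (i : ℕ) : c i ∈ L := by
  induction i with
  | zero => exact Submodule.mem_sInf.2 fun _ hS => hS.2.1
  | succ i ih => exact c_succ i ▸ isBracketClosed_L a (Submodule.mem_sInf.2 fun _ hS => hS.1) _ ih

def dSpan (n : ℕ) : Submodule ℚ A := Submodule.span ℚ {x | ∃ i j, i + j + 2 = n ∧ d i j = x}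

theorem wordsProj_mem_dSpan {x : A} (hx : x ∈ cover) (n : ℕ) :
    wordsProj (fun w => w.count 1 = 2 ∧ w.length = n) x ∈ dSpan n := by
  refine (Submodule.span_le (p := (dSpan n).comap _)).2 (fun g hg => ?_) hx
  have of_ne {k m : ℕ} (hg : g ∈ homog k m) (hk : k ≠ 2) :
      wordsProj (fun w => w.count 1 = 2 ∧ w.length = n) g ∈ dSpan n := by
    rw [wordsProj_of_mem_homog hg, if_neg fun h => hk h.1]
    exact zero_mem _
  rcases hg with (rfl | rfl) | ((⟨i, rfl⟩ | ⟨⟨i, j⟩, rfl⟩) | ⟨w, hw, rfl⟩)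
  · exact of_ne a_mem_homog (by decide)
  · exact of_ne (mul_mem_homog a_mem_homog a_mem_homog) (by decide)
  · exact of_ne (c_mem_homog i) (by decide)
  · show wordsProj _ (d i j) ∈ dSpan n
    rw [wordsProj_of_mem_homog (d_mem_homog i j)]
    split_ifs with h
    exacts [Submodule.subset_span ⟨i, j, h.2, rfl⟩, zero_mem _]
  · exact of_ne (word_mem_homog w) (by simp at hw; omega)

theorem Lkn_two_eq_dSpan (n : ℕ) : Lkn 2 n = dSpan n := by
  apply le_antisymm
  · rintro x ⟨hxL, hx⟩
    rw [← wordsProj_eq_self (fun _ hw => hw) hx]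
    exact wordsProj_mem_dSpan (L_le_cover hxL) n
  · refine Submodule.span_le.2 ?_
    rintro _ ⟨i, j, rfl, rfl⟩
    exact ⟨isBracketClosed_L _ (c_mem_L i) _ (c_mem_L j), d_mem_homog i j⟩

def baPow (i : ℕ) : List (Fin 2) := 1 :: List.replicate i 0

theorem exists_c_eq (i : ℕ) : ∃ γ : ℚ, γ ≠ 0 ∧ ∃ y, c i = γ • word (baPow i) + a * y := by
  induction i with
  | zero => exact ⟨1, one_ne_zero, 0, by simp [c_zero, b_eq_word, baPow]⟩
  | succ i ih =>
    obtain ⟨γ, hγ, y, hy⟩ := ih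
    have hshift : word (baPow i) * a = word (baPow (i + 1)) := by
      rw [a_eq_word, ← word_append, baPow, baPow, List.replicate_succ', List.cons_append]
    refine ⟨-(-1) ^ (i + 1) * γ, by simp [hγ], c i - (-1 : ℚ) ^ (i + 1) • (y * a), ?_⟩
    rw [c_succ, br_eq_of_homog a_mem_homog (c_mem_homog i), one_mul, ← hshift, mul_sub,
      mul_smul_comm]
    nth_rw 2 [hy]
    simp only [add_mul, smul_add, smul_mul_assoc, mul_assoc, smul_smul]
    module

theorem not_prefix_baPow {t i : ℕ} (h : t < i) (u : ℕ) : ¬ baPow i <+: baPow t ++ baPow u := by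
  simp only [baPow, List.cons_append, List.cons_prefix_cons, true_and]
  induction t generalizing i with
  | zero => cases i <;> simp_all [List.replicate_succ]
  | succ t ih =>
    obtain ⟨i, rfl⟩ : ∃ i', i = i' + 1 := ⟨i - 1, by omega⟩
    simpa [List.replicate_succ] using ih (by omega)

theorem coeff_c_mul_of_lt {t i : ℕ} (h : t < i) (u : ℕ) (x : A) :
    coeff (baPow t ++ baPow u) (c i * x) = 0 := by
  obtain ⟨γ, -, y, hy⟩ := exists_c_eq i
  have hy₀ : coeff (baPow t ++ baPow u) (a * (y * x)) = 0 := coeff_one_cons_a_mul _ _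
  rw [hy, add_mul, smul_mul_assoc, mul_assoc, map_add, map_smul,
    coeff_word_mul_of_not_prefix (not_prefix_baPow h u), hy₀, smul_zero, add_zero]

theorem coeff_c_mul_c_ne_zero (i j : ℕ) : coeff (baPow i ++ baPow j) (c i * c j) ≠ 0 := by
  obtain ⟨γ, hγ, y, hy⟩ := exists_c_eq i
  obtain ⟨γ', hγ', y', hy'⟩ := exists_c_eq j
  have hy₀ : coeff (baPow i ++ baPow j) (a * (y * c j)) = 0 := coeff_one_cons_a_mul _ _
  have hy₀' : coeff (baPow j) (a * y') = 0 := coeff_one_cons_a_mul _ _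
  rw [hy, add_mul, smul_mul_assoc, mul_assoc, map_add, map_smul, coeff_append_word_mul, hy₀, hy',
    map_add, map_smul, coeff_word, if_pos rfl, hy₀']
  simp [hγ, hγ']

theorem coeff_d_of_lt {t i j : ℕ} (hi : t < i) (hj : t < j) (u : ℕ) :
    coeff (baPow t ++ baPow u) (d i j) = 0 := by
  rw [d_eq, map_sub, map_smul, coeff_c_mul_of_lt hi, coeff_c_mul_of_lt hj, smul_zero, sub_zero]

theorem coeff_d_ne_zero {i j : ℕ} (h : i < j ∨ i = j ∧ Even i) :
    coeff (baPow i ++ baPow j) (d i j) ≠ 0 := by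
  rcases h with h | ⟨rfl, hi⟩
  · rw [d_eq, map_sub, map_smul, coeff_c_mul_of_lt h, smul_zero, sub_zero]
    exact coeff_c_mul_c_ne_zero i j
  · have hodd : Odd ((i + 1) * (i + 1)) := by simp [hi]
    rw [d_eq, hodd.neg_one_pow, neg_one_smul, sub_neg_eq_add, map_add, ← two_mul]
    exact mul_ne_zero two_ne_zero (coeff_c_mul_c_ne_zero i i)

def dimFormula (n : ℕ) : ℕ :=
  if n % 4 = 0 then n / 2 - 1 else if Odd n then (n - 1) / 2 else n / 2

theorem lt_dimFormula_iff {n k : ℕ} :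
    k < dimFormula n ↔ 2 * k + 2 < n ∨ 2 * k + 2 = n ∧ Even k := by
  simp only [dimFormula, Nat.odd_iff, Nat.even_iff]
  split_ifs <;> omega

def dFamily (n : ℕ) (k : Fin (dimFormula n)) : A := d k (n - 2 - k)

theorem dSpan_eq_span_dFamily (n : ℕ) : dSpan n = Submodule.span ℚ (Set.range (dFamily n)) := by
  refine le_antisymm (Submodule.span_le.2 ?_) (Submodule.span_le.2 ?_)
  · rintro _ ⟨i, j, rfl, rfl⟩
    have mem {k l : ℕ} (hkl : k < l ∨ k = l ∧ Even k) (hn : k + l + 2 = i + j + 2) :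
        d k l ∈ Submodule.span ℚ (Set.range (dFamily (i + j + 2))) := by
      refine Submodule.subset_span ⟨⟨k, lt_dimFormula_iff.2 ?_⟩, ?_⟩
      · rcases hkl with h | ⟨rfl, h⟩
        exacts [.inl (by omega), .inr ⟨by omega, h⟩]
      · simp only [dFamily]
        congr 1
        omega
    rcases lt_trichotomy i j with h | rfl | h
    · exact mem (.inl h) rfl
    · rcases Nat.even_or_odd i with hi | hi
      · exact mem (.inr ⟨rfl, hi⟩) rfl
      · rw [d, br_self_eq_zero_of_even (c_mem_homog i) hi.add_one]
        exact zero_mem _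
    · rw [d, br_swap (c_mem_homog j) (c_mem_homog i)]
      exact Submodule.smul_mem _ _ (mem (.inl h) (add_comm j i ▸ rfl))
  · rintro _ ⟨k, rfl⟩
    have := lt_dimFormula_iff.1 k.2
    exact Submodule.subset_span ⟨k, n - 2 - k, by omega, rfl⟩

theorem linearIndependent_dFamily (n : ℕ) : LinearIndependent ℚ (dFamily n) := by
  refine linearIndependent_of_triangular _ (fun t => coeff (baPow t ++ baPow (n - 2 - t)))
    (fun t k htk => coeff_d_of_lt htk ?_ _) (fun k => coeff_d_ne_zero ?_)
  · have := lt_dimFormula_iff.1 k.2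
    omega
  · rcases lt_dimFormula_iff.1 k.2 with h | ⟨h, hk⟩
    exacts [.inl (by omega), .inr ⟨by omega, hk⟩]

end Omnibus

open Omnibus in
theorem dim_wordLengthTwoInB_general (n : ℕ) :
    FiniteDimensional ℚ (Lkn 2 n) ∧
    Module.finrank ℚ (Lkn 2 n) =
      (if n % 4 = 0 then n / 2 - 1 else if Odd n then (n - 1) / 2 else n / 2) := by
  rw [Lkn_two_eq_dSpan, dSpan_eq_span_dFamily]
  exact ⟨FiniteDimensional.span_of_finite ℚ (Set.finite_range _),
    (finrank_span_eq_card (linearIndependent_dFamily n)).trans (Fintype.card_fin _)⟩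

open Omnibus in
/-- For every `n ≥ 1`, the component `L^{(2,n)}` of word length `n` and word length `2` in `b`
of the free graded Lie algebra on two odd generators is finite dimensional, of dimension
`n/2 − 1` if `n ≡ 0 (4)`, `(n−1)/2` if `n` is odd, and `n/2` if `n ≡ 2 (4)`. -/
theorem dim_wordLengthTwoInB (n : ℕ) (hn : 1 ≤ n) :
    FiniteDimensional ℚ (Lkn 2 n) ∧
    Module.finrank ℚ (Lkn 2 n) =
      (if n % 4 = 0 then n / 2 - 1 else if Odd n then (n - 1) / 2 else n / 2) :=
  dim_wordLengthTwoInB_general n
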